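/- Let ℏ ≠ 0, a, b, c, d, t ∈ ℂ with t(t−1) ≠ 0, and m a nonnegative integer. The operator given by t(t−1)·H_VI(Φ) = x(x−1)(x−t)ℏ²Φ'' − ((a+b)(x−1)(x−t) + c x(x−t) + d x(x−1))ℏΦ' + (b+c+d+ℏ)a(x−t)Φ maps polynomials of degree ≤ m into polynomials of degree ≤ m if and only if a = mℏ or b + c + d = (m−1)ℏ. -/

import Mathlib

/-!
Grouping the operator into the Euler-type pieces `X²Φ''` and `XΦ'`, whose `n`-th coefficients are
`n(n−1)Φₙ` and `nΦₙ`, shows that for `deg Φ ≤ m` and `n ≥ m` the `x^(n+1)` coefficient of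
`t(t−1)·H_VI Φ` is `(a − nℏ)(b + c + d − (n−1)ℏ)·Φₙ`. Hence `H_VI Φ` has degree at most `m + 1`,
and its `x^(m+1)` coefficient vanishes for every such `Φ` (test `Φ = x^m`) exactly when that
factor vanishes at `n = m`.
-/

open Polynomial

/-- The quantized Painlevé VI Hamiltonian acting on polynomials:
`t(t−1)·H_VI Φ = x(x−1)(x−t)(ℏ d/dx)² Φ
  − ((a+b)(x−1)(x−t) + c x(x−t) + d x(x−1))(ℏ d/dx) Φ
  + (b+c+d+ℏ)a(x−t)·Φ`. -/
noncomputable def HVI (ℏ a b c d t : ℂ) (Φ : ℂ[X]) : ℂ[X] :=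
  C (t * (t - 1))⁻¹ *
    (X * (X - 1) * (X - C t) * (ℏ ^ 2 • derivative (derivative Φ))
      - (C (a + b) * (X - 1) * (X - C t) + C c * X * (X - C t)
          + C d * X * (X - 1)) * (ℏ • derivative Φ)
      + C ((b + c + d + ℏ) * a) * (X - C t) * Φ)

section EulerCoefficients

variable {R : Type*} [CommRing R]

lemma coeff_X_mul_derivative (p : R[X]) (n : ℕ) :
    (X * derivative p).coeff n = n * p.coeff n := by
  cases n with
  | zero => simp
  | succ n => rw [coeff_X_mul, coeff_derivative]; push_cast; ring

lemma coeff_X_sq_mul_derivative_derivative (p : R[X]) (n : ℕ) :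
    (X ^ 2 * derivative (derivative p)).coeff n = n * (n - 1) * p.coeff n := by
  match n with
  | 0 => simp
  | 1 => simp [coeff_X_pow_mul']
  | n + 2 => rw [coeff_X_pow_mul, coeff_derivative, coeff_derivative]; push_cast; ring

end EulerCoefficients

section HVI

variable (ℏ a b c d t : ℂ)

lemma HVI_eq_euler (Φ : ℂ[X]) :
    HVI ℏ a b c d t Φ = C (t * (t - 1))⁻¹ *
      (C (ℏ ^ 2) * (X * (X ^ 2 * derivative (derivative Φ))
          - C (t + 1) * (X ^ 2 * derivative (derivative Φ))
          + C t * (X * derivative (derivative Φ)))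
        - C ℏ * (C (a + b + c + d) * (X * (X * derivative Φ))
          - C ((a + b) * (t + 1) + c * t + d) * (X * derivative Φ)
          + C ((a + b) * t) * derivative Φ)
        + C ((b + c + d + ℏ) * a) * (X * Φ - C t * Φ)) := by
  unfold HVI
  simp only [smul_eq_C_mul, map_add, map_mul, map_pow, map_one]
  ring

lemma coeff_HVI_succ {m n : ℕ} {Φ : ℂ[X]} (hΦ : Φ.degree ≤ m) (hn : m ≤ n) :
    (HVI ℏ a b c d t Φ).coeff (n + 1) =
      (t * (t - 1))⁻¹ * ((a - n * ℏ) * (b + c + d - (n - 1) * ℏ)) * Φ.coeff n := by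
  have hvanish : ∀ k, n < k → Φ.coeff k = 0 := fun k hk =>
    coeff_eq_zero_of_degree_lt (hΦ.trans_lt (by exact_mod_cast hn.trans_lt hk))
  rw [HVI_eq_euler]
  simp only [coeff_C_mul, coeff_add, coeff_sub, coeff_X_mul, coeff_X_sq_mul_derivative_derivative,
    coeff_X_mul_derivative, coeff_derivative, hvanish (n + 1) n.lt_succ_self,
    hvanish (n + 2) (by omega)]
  push_cast
  ring

lemma degree_HVI_le_iff {m : ℕ} {Φ : ℂ[X]} (ht : t * (t - 1) ≠ 0) (hΦ : Φ.degree ≤ m) :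
    (HVI ℏ a b c d t Φ).degree ≤ m ↔
      (a - m * ℏ) * (b + c + d - (m - 1) * ℏ) * Φ.coeff m = 0 := by
  rw [degree_le_iff_coeff_zero]
  constructor
  · intro h
    have htop := h (m + 1) (by exact_mod_cast m.lt_succ_self)
    rwa [coeff_HVI_succ ℏ a b c d t hΦ le_rfl, mul_assoc, mul_eq_zero,
      or_iff_right (inv_ne_zero ht)] at htop
  · intro h n hn
    obtain ⟨k, rfl, hk⟩ : ∃ k, n = k + 1 ∧ m ≤ k := ⟨n - 1, by norm_cast at hn; omega⟩
    rw [coeff_HVI_succ ℏ a b c d t hΦ hk, mul_assoc]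
    rcases hk.eq_or_lt with rfl | hk
    · rw [h, mul_zero]
    · rw [coeff_eq_zero_of_degree_lt (hΦ.trans_lt (by exact_mod_cast hk)), mul_zero, mul_zero]

end HVI

theorem stmt5_general (ℏ a b c d t : ℂ) (ht : t * (t - 1) ≠ 0) (m : ℕ) :
    (∀ Φ : ℂ[X], Φ.degree ≤ m → (HVI ℏ a b c d t Φ).degree ≤ m) ↔
      a = m * ℏ ∨ b + c + d = ((m : ℂ) - 1) * ℏ := by
  constructor
  · intro h
    have hXm : (X ^ m : ℂ[X]).degree ≤ m := (degree_X_pow m).le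
    simpa [sub_eq_zero] using (degree_HVI_le_iff ℏ a b c d t ht hXm).1 (h _ hXm)
  · intro h Φ hΦ
    rw [degree_HVI_le_iff ℏ a b c d t ht hΦ]
    rcases h with h | h <;> simp [h]

/-- `H_VI` preserves the space of polynomials of degree ≤ m iff
`a = mℏ` or `b + c + d = (m−1)ℏ`. -/
theorem stmt5 (ℏ a b c d t : ℂ) (hℏ : ℏ ≠ 0) (ht : t * (t - 1) ≠ 0) (m : ℕ) :
    (∀ Φ : ℂ[X], Φ.degree ≤ m → (HVI ℏ a b c d t Φ).degree ≤ m) ↔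
      a = m * ℏ ∨ b + c + d = ((m : ℂ) - 1) * ℏ :=
  stmt5_general ℏ a b c d t ht m
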